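/- (Selection of good radii.) Fix N ≥ 1 and n ≥ 1. Let f_1, …, f_n : ℝ^N → [0,∞) be continuous, let α_1, …, α_n ∈ ℝ and C_1, …, C_n > 0 be constants, and for each i define g_i(r) := ∫_{S^{N−1}} f_i(rθ) dθ. Suppose that for every i and every R ≥ 1, ∫_{B_R \ B_{R/2}} f_i(x) dx ≤ C_i R^{N−α_i}. Then there exist a constant C > 0 and a sequence R_m ≥ 1 with R_m → ∞ such that g_i(R_m) ≤ C R_m^{−α_i} for all i ∈ {1,…,n} and all m. -/

import Mathlib

open MeasureTheory Metric Filter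
open scoped RealInnerProductSpace

/-- The Laplacian of `u : ℝ^N → ℝ`, the sum of the pure second partial derivatives
`∑ i, ∂²u/∂x_i²`. -/
noncomputable def lap {N : ℕ} (u : EuclideanSpace ℝ (Fin N) → ℝ)
    (x : EuclideanSpace ℝ (Fin N)) : ℝ :=
  ∑ i : Fin N, iteratedFDeriv ℝ 2 u x (fun _ => EuclideanSpace.single i 1)

/-- The bilaplacian `Δ²u = Δ(Δu)`. -/
noncomputable def bilap {N : ℕ} (u : EuclideanSpace ℝ (Fin N) → ℝ) :
    EuclideanSpace ℝ (Fin N) → ℝ :=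
  lap (lap u)

/-!
Polar coordinates, together with `r^{N-1} ≥ P^{N-1}` on the shell `P ≤ ‖x‖ < 2P`, turn the annulus
bound at `R = 2P` into `∫_P^{2P} g_i ≤ b_i P` with `b_i = c_i 2^{N-α_i} P^{-α_i}`. Hence
`∑_i g_i / b_i` has mean at most `n` on `[P, 2P)`, and at a radius `r` where it does not exceed its
mean, `g_i(r) ≤ n b_i` for every `i` simultaneously. Since `P ≤ r ≤ 2P`,
`P^{-α_i} ≤ 2^{|α_i|} r^{-α_i}`; taking `P = 2^m` gives the sequence.
-/

open Set

theorem Real.rpow_neg_le_two_rpow_abs_mul_rpow_neg {P r : ℝ} (hP : 0 < P) (hPr : P ≤ r)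
    (hr : r ≤ 2 * P) (a : ℝ) : P ^ (-a) ≤ 2 ^ |a| * r ^ (-a) := by
  have hr₀ : 0 < r := hP.trans_le hPr
  rcases le_or_gt 0 a with ha | ha
  · calc P ^ (-a) = 2 ^ a * (2 * P) ^ (-a) := by
          rw [Real.mul_rpow zero_le_two hP.le, ← mul_assoc, ← Real.rpow_add zero_lt_two,
            add_neg_cancel, Real.rpow_zero, one_mul]
      _ ≤ 2 ^ |a| * r ^ (-a) := by
          rw [abs_of_nonneg ha]
          exact mul_le_mul_of_nonneg_left (Real.rpow_le_rpow_of_nonpos hr₀ hr (neg_nonpos.2 ha))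
            (by positivity)
  · calc P ^ (-a) ≤ 1 * r ^ (-a) := by
          rw [one_mul]; exact Real.rpow_le_rpow hP.le hPr (neg_nonneg.2 ha.le)
      _ ≤ 2 ^ |a| * r ^ (-a) := by
          gcongr
          exact Real.one_le_rpow one_le_two (abs_nonneg a)

namespace MeasureTheory

theorem exists_mem_forall_measure_mul_le_card_mul {α ι : Type*} [MeasurableSpace α] [Fintype ι]
    {μ : Measure α} {s : Set α} (hs₀ : μ s ≠ 0) (hs : μ s ≠ ⊤)
    {G : ι → α → ENNReal} (hG : ∀ i, AEMeasurable (G i) (μ.restrict s)) {B : ι → ENNReal}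
    (hB₀ : ∀ i, B i ≠ 0) (hB : ∀ i, B i ≠ ⊤) (hGB : ∀ i, ∫⁻ x in s, G i x ∂μ ≤ B i) :
    ∃ x ∈ s, ∀ i, μ s * G i x ≤ Fintype.card ι * B i := by
  set H : α → ENNReal := fun x => ∑ i, (B i)⁻¹ * G i x
  have hH : ∫⁻ x in s, H x ∂μ ≤ Fintype.card ι := calc
    ∫⁻ x in s, H x ∂μ = ∑ i, (B i)⁻¹ * ∫⁻ x in s, G i x ∂μ := by
      rw [lintegral_finsetSum' _ fun i _ => (hG i).const_mul _]
      simp_rw [lintegral_const_mul' _ _ (ENNReal.inv_ne_top.2 (hB₀ _))]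
    _ ≤ ∑ i, (B i)⁻¹ * B i := by gcongr with i; exact hGB i
    _ = Fintype.card ι := by simp [ENNReal.inv_mul_cancel (hB₀ _) (hB _)]
  obtain ⟨x, hx, hHx⟩ := exists_le_setLAverage (f := H) hs₀ hs
    (Finset.aemeasurable_fun_sum _ fun i _ => (hG i).const_mul _)
  refine ⟨x, hx, fun i => ?_⟩
  rw [setLAverage_eq, ENNReal.le_div_iff_mul_le (Or.inl hs₀) (Or.inl hs)] at hHx
  calc μ s * G i x = μ s * (B i * (B i)⁻¹ * G i x) := by
        rw [ENNReal.mul_inv_cancel (hB₀ i) (hB i), one_mul]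
    _ = B i * (μ s * ((B i)⁻¹ * G i x)) := by ring
    _ ≤ B i * (μ s * H x) := by
        gcongr
        exact Finset.single_le_sum (f := fun j => (B j)⁻¹ * G j x) (by simp) (Finset.mem_univ i)
    _ ≤ Fintype.card ι * B i := by
        rw [mul_comm (Fintype.card ι : ENNReal), mul_comm (μ s)]
        gcongr
        exact hHx.trans hH

section PolarCoordinates

variable {E : Type*} [NormedAddCommGroup E] [NormedSpace ℝ E] [FiniteDimensional ℝ E]
  [MeasurableSpace E] [BorelSpace E] [Nontrivial E] (μ : Measure E) [μ.IsAddHaarMeasure]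

theorem lintegral_eq_lintegral_Ioi_mul_lintegral_toSphere {g : E → ENNReal} (hg : Measurable g) :
    ∫⁻ x, g x ∂μ = ∫⁻ r in Ioi (0 : ℝ), ENNReal.ofReal (r ^ (Module.finrank ℝ E - 1)) *
      ∫⁻ θ : sphere (0 : E) 1, g (r • (θ : E)) ∂μ.toSphere := by
  have hmeas : Measurable fun p : sphere (0 : E) 1 × Ioi (0 : ℝ) => g ((p.2 : ℝ) • (p.1 : E)) :=
    hg.comp (by fun_prop)
  calc ∫⁻ x, g x ∂μ = ∫⁻ x : ({0}ᶜ : Set E), g x ∂μ.comap Subtype.val := by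
        rw [lintegral_subtype_comap (measurableSet_singleton 0).compl, restrict_compl_singleton]
    _ = ∫⁻ p : sphere (0 : E) 1 × Ioi (0 : ℝ), g ((p.2 : ℝ) • (p.1 : E))
          ∂μ.toSphere.prod (Measure.volumeIoiPow (Module.finrank ℝ E - 1)) := by
        rw [← (μ.measurePreserving_homeomorphUnitSphereProd).lintegral_comp_emb
          (Homeomorph.measurableEmbedding _)]
        refine lintegral_congr fun x => ?_
        simp [smul_smul, mul_inv_cancel₀ (norm_ne_zero_iff.2 x.2)]
    _ = ∫⁻ r : Ioi (0 : ℝ), ∫⁻ θ : sphere (0 : E) 1, g ((r : ℝ) • (θ : E)) ∂μ.toSphere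
          ∂Measure.volumeIoiPow (Module.finrank ℝ E - 1) := lintegral_prod_symm' _ hmeas
    _ = _ := by
        rw [Measure.volumeIoiPow, lintegral_withDensity_eq_lintegral_mul _ (by fun_prop)
          (hmeas.lintegral_prod_left')]
        exact lintegral_subtype_comap measurableSet_Ioi (fun r : ℝ =>
          ENNReal.ofReal (r ^ (Module.finrank ℝ E - 1)) *
            ∫⁻ θ : sphere (0 : E) 1, g (r • (θ : E)) ∂μ.toSphere)

theorem setLIntegral_norm_preimage_eq {S : Set ℝ} (hS : MeasurableSet S) (hS₀ : S ⊆ Ioi 0)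
    {g : E → ENNReal} (hg : Measurable g) :
    ∫⁻ x in norm ⁻¹' S, g x ∂μ = ∫⁻ r in S, ENNReal.ofReal (r ^ (Module.finrank ℝ E - 1)) *
      ∫⁻ θ : sphere (0 : E) 1, g (r • (θ : E)) ∂μ.toSphere := by
  rw [← lintegral_indicator (measurable_norm hS),
    lintegral_eq_lintegral_Ioi_mul_lintegral_toSphere μ (hg.indicator (measurable_norm hS)),
    ← Measure.restrict_restrict_of_subset hS₀, ← lintegral_indicator hS]
  refine setLIntegral_congr_fun measurableSet_Ioi fun r (hr : 0 < r) => ?_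
  have hnorm (θ : sphere (0 : E) 1) : ‖r • (θ : E)‖ = r := by simp [norm_smul, hr.le]
  by_cases hrS : r ∈ S <;> simp [hrS, indicator, hnorm]

theorem ofReal_pow_mul_setLIntegral_Ico_toSphere_le {s t : ℝ} (hs : 0 < s) {g : E → ENNReal}
    (hg : Measurable g) :
    ENNReal.ofReal (s ^ (Module.finrank ℝ E - 1)) *
        ∫⁻ r in Ico s t, ∫⁻ θ : sphere (0 : E) 1, g (r • (θ : E)) ∂μ.toSphere ≤
      ∫⁻ x in ball 0 t \ ball 0 s, g x ∂μ := by
  have hannulus : ball (0 : E) t \ ball 0 s = norm ⁻¹' Ico s t := by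
    ext x; simp [and_comm]
  rw [hannulus, setLIntegral_norm_preimage_eq μ measurableSet_Ico
    (fun r hr => hs.trans_le hr.1) hg, ← lintegral_const_mul' _ _ ENNReal.ofReal_ne_top]
  refine setLIntegral_mono' measurableSet_Ico fun r hr => ?_
  gcongr
  exact hr.1

theorem exists_mem_Ico_forall_integral_toSphere_le {ι : Type*} [Fintype ι] {f : ι → E → ℝ}
    (hf : ∀ i, Continuous (f i)) (hf₀ : ∀ i x, 0 ≤ f i x) {P : ℝ} (hP : 0 < P) {b : ι → ℝ}
    (hb : ∀ i, 0 < b i)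
    (h : ∀ i, ∫ x in ball 0 (2 * P) \ ball 0 P, f i x ∂μ ≤ b i * P ^ (Module.finrank ℝ E - 1)) :
    ∃ r ∈ Ico P (2 * P), ∀ i,
      ∫ θ : sphere (0 : E) 1, f i (r • (θ : E)) ∂μ.toSphere ≤ Fintype.card ι * b i / P := by
  set G : ι → ℝ → ENNReal := fun i r =>
    ∫⁻ θ : sphere (0 : E) 1, ENNReal.ofReal (f i (r • (θ : E))) ∂μ.toSphere
  have hf_meas (i : ι) : Measurable fun x => ENNReal.ofReal (f i x) :=
    (hf i).measurable.ennreal_ofReal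
  have hG (i : ι) : Measurable (G i) :=
    ((hf_meas i).comp (by fun_prop : Measurable fun p : ℝ × sphere (0 : E) 1 =>
      p.1 • (p.2 : E))).lintegral_prod_right'
  have hGb (i : ι) : ∫⁻ r in Ico P (2 * P), G i r ≤ ENNReal.ofReal (b i) := by
    have hPd : 0 < P ^ (Module.finrank ℝ E - 1) := by positivity
    have hint : IntegrableOn (f i) (ball 0 (2 * P) \ ball 0 P) μ :=
      ((hf i).locallyIntegrable.integrableOn_isCompact (isCompact_closedBall 0 (2 * P))).mono_set
        (sdiff_subset.trans ball_subset_closedBall)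
    rw [← ENNReal.mul_le_mul_iff_right (ENNReal.ofReal_pos.2 hPd).ne' ENNReal.ofReal_ne_top,
      ← ENNReal.ofReal_mul hPd.le, mul_comm _ (b i)]
    calc ENNReal.ofReal (P ^ (Module.finrank ℝ E - 1)) * ∫⁻ r in Ico P (2 * P), G i r
        ≤ ∫⁻ x in ball 0 (2 * P) \ ball 0 P, ENNReal.ofReal (f i x) ∂μ :=
          ofReal_pow_mul_setLIntegral_Ico_toSphere_le μ hP (hf_meas i)
      _ = ENNReal.ofReal (∫ x in ball 0 (2 * P) \ ball 0 P, f i x ∂μ) :=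
          (ofReal_integral_eq_lintegral_ofReal hint (.of_forall (hf₀ i))).symm
      _ ≤ _ := ENNReal.ofReal_le_ofReal (h i)
  have hvol : volume (Ico P (2 * P)) = ENNReal.ofReal P := by
    rw [Real.volume_Ico]; ring_nf
  obtain ⟨r, hr, hrG⟩ := exists_mem_forall_measure_mul_le_card_mul (by simpa [hvol] using hP)
    (by simp [hvol]) (fun i => (hG i).aemeasurable)
    (fun i => (ENNReal.ofReal_pos.2 (hb i)).ne') (fun _ => ENNReal.ofReal_ne_top) hGb
  refine ⟨r, hr, fun i => ?_⟩
  have hrG_real := ENNReal.toReal_mono (by finiteness) (hrG i)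
  rw [hvol, ENNReal.toReal_mul, ENNReal.toReal_mul, ENNReal.toReal_ofReal hP.le,
    ENNReal.toReal_ofReal (hb i).le, ENNReal.toReal_natCast] at hrG_real
  rw [integral_eq_lintegral_of_nonneg_ae (.of_forall fun θ => hf₀ i _)
    ((hf i).comp (by fun_prop)).aestronglyMeasurable, le_div_iff₀ hP, mul_comm]
  exact hrG_real

theorem exists_mem_Icc_forall_integral_toSphere_le_rpow {ι : Type*} [Fintype ι] {f : ι → E → ℝ}
    (hf : ∀ i, Continuous (f i)) (hf₀ : ∀ i x, 0 ≤ f i x) {P : ℝ} (hP : 0 < P) {a c : ι → ℝ}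
    (hc : ∀ i, 0 < c i)
    (h : ∀ i, ∫ x in ball 0 (2 * P) \ ball 0 P, f i x ∂μ ≤
      c i * (2 * P) ^ ((Module.finrank ℝ E : ℝ) - a i)) :
    ∃ r ∈ Icc P (2 * P), ∀ i, ∫ θ : sphere (0 : E) 1, f i (r • (θ : E)) ∂μ.toSphere ≤
      Fintype.card ι * c i * 2 ^ ((Module.finrank ℝ E : ℝ) - a i) * 2 ^ |a i| * r ^ (-a i) := by
  set d := Module.finrank ℝ E
  have hd : 1 ≤ d := Module.finrank_pos
  have hscale (i : ι) : (2 * P) ^ ((d : ℝ) - a i) =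
      2 ^ ((d : ℝ) - a i) * P ^ (-a i) * P ^ (d - 1) * P := by
    have hPd : P ^ ((d : ℝ) - a i) = P ^ (d - 1) * P * P ^ (-a i) := by
      rw [sub_eq_add_neg, Real.rpow_add hP, Real.rpow_natCast, ← pow_succ, Nat.sub_add_cancel hd]
    rw [Real.mul_rpow zero_le_two hP.le, hPd]
    ring
  obtain ⟨r, hr, hbound⟩ := exists_mem_Ico_forall_integral_toSphere_le μ hf hf₀ hP
    (b := fun i => c i * 2 ^ ((d : ℝ) - a i) * P ^ (-a i) * P)
    (fun i => by have := hc i; positivity)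
    fun i => by simpa only [hscale, mul_assoc, mul_comm (P ^ (d - 1))] using h i
  refine ⟨r, Ico_subset_Icc_self hr, fun i => (hbound i).trans ?_⟩
  rw [mul_div_assoc, mul_div_cancel_right₀ _ hP.ne']
  have hci := hc i
  calc _ = Fintype.card ι * c i * 2 ^ ((d : ℝ) - a i) * P ^ (-a i) := by ring
    _ ≤ Fintype.card ι * c i * 2 ^ ((d : ℝ) - a i) * (2 ^ |a i| * r ^ (-a i)) := by
        gcongr
        exact Real.rpow_neg_le_two_rpow_abs_mul_rpow_neg hP hr.1 hr.2.le (a i)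
    _ = _ := by ring

end PolarCoordinates

end MeasureTheory

theorem good_radii_selection_general (N n : ℕ) (hN : 1 ≤ N)
    (f : Fin n → EuclideanSpace ℝ (Fin N) → ℝ)
    (hf_cont : ∀ i, Continuous (f i)) (hf_nonneg : ∀ i x, 0 ≤ f i x)
    (a : Fin n → ℝ) (c : Fin n → ℝ) (hc : ∀ i, 0 < c i)
    (hbound : ∀ i, ∀ R ≥ (1 : ℝ),
      (∫ x in ball (0 : EuclideanSpace ℝ (Fin N)) R \ ball 0 (R / 2), f i x) ≤
        c i * R ^ ((N : ℝ) - a i)) :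
    ∃ C > (0 : ℝ), ∃ Rm : ℕ → ℝ, (∀ m, 1 ≤ Rm m) ∧ Tendsto Rm atTop atTop ∧
      ∀ i m,
        (∫ θ : sphere (0 : EuclideanSpace ℝ (Fin N)) 1,
            f i (Rm m • (θ : EuclideanSpace ℝ (Fin N)))
              ∂((volume : Measure (EuclideanSpace ℝ (Fin N))).toSphere)) ≤
          C * Rm m ^ (-(a i)) := by
  have : Nonempty (Fin N) := ⟨⟨0, hN⟩⟩
  have hshell (m : ℕ) := exists_mem_Icc_forall_integral_toSphere_le_rpow volume hf_cont
    hf_nonneg (pow_pos two_pos m) hc fun i => by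
      simpa using hbound i (2 * 2 ^ m) (one_le_mul_of_one_le_of_one_le one_le_two
        (one_le_pow₀ one_le_two))
  choose R hR hR_bound using hshell
  obtain ⟨C, hC⟩ := Finite.exists_le fun i : Fin n => n * c i * 2 ^ ((N : ℝ) - a i) * 2 ^ |a i|
  refine ⟨max C 1, by positivity, R, fun m => (one_le_pow₀ one_le_two).trans (hR m).1,
    tendsto_atTop_mono (fun m => (hR m).1) (tendsto_pow_atTop_atTop_of_one_lt one_lt_two),
    fun i m => ?_⟩
  have hR₀ : 0 ≤ R m := (pow_pos two_pos m).le.trans (hR m).1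
  refine (hR_bound m i).trans ?_
  simp only [finrank_euclideanSpace_fin, Fintype.card_fin]
  gcongr
  exact (hC i).trans (le_max_left C 1)

/-- **Selection of good radii.** Let `f_1, …, f_n : ℝ^N → [0,∞)` be continuous with
`∫_{B_R \ B_{R/2}} f_i ≤ C_i R^{N-α_i}` for all `R ≥ 1`. Then, with
`g_i(r) = ∫_{S^{N-1}} f_i(rθ) dθ`, there are `C > 0` and a sequence `R_m ≥ 1`,
`R_m → ∞`, such that `g_i(R_m) ≤ C R_m^{-α_i}` for every `i` and `m`. -/
theorem good_radii_selection (N n : ℕ) (hN : 1 ≤ N) (hn : 1 ≤ n)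
    (f : Fin n → EuclideanSpace ℝ (Fin N) → ℝ)
    (hf_cont : ∀ i, Continuous (f i)) (hf_nonneg : ∀ i x, 0 ≤ f i x)
    (a : Fin n → ℝ) (c : Fin n → ℝ) (hc : ∀ i, 0 < c i)
    (hbound : ∀ i, ∀ R ≥ (1 : ℝ),
      (∫ x in ball (0 : EuclideanSpace ℝ (Fin N)) R \ ball 0 (R / 2), f i x) ≤
        c i * R ^ ((N : ℝ) - a i)) :
    ∃ C > (0 : ℝ), ∃ Rm : ℕ → ℝ, (∀ m, 1 ≤ Rm m) ∧ Tendsto Rm atTop atTop ∧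
      ∀ i m,
        (∫ θ : sphere (0 : EuclideanSpace ℝ (Fin N)) 1,
            f i (Rm m • (θ : EuclideanSpace ℝ (Fin N)))
              ∂((volume : Measure (EuclideanSpace ℝ (Fin N))).toSphere)) ≤
          C * Rm m ^ (-(a i)) :=
  good_radii_selection_general N n hN f hf_cont hf_nonneg a c hc hbound
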